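/- Let S, T, Z be closed subspaces of a complex Hilbert space H with Z ∔ S = H and Z ∔ T = H. Let E_{Z∥S}, E_{T∥Z}, E_{S∥Z} denote the continuous idempotents with range Z and kernel S, range T and kernel Z, and range S and kernel Z, respectively. Then the operator L := E_{Z∥S} + E_{T∥Z} E_{S∥Z} is invertible in B(H), satisfies L(Z) = Z, and L maps S bijectively onto T (in particular L(S) = T). -/

import Mathlib

/-!
The argument is purely algebraic. Write `p = E_{Z∥S}` and `q = E_{T∥Z}`. Two idempotents with
the same range and kernel coincide, so `E_{S∥Z} = 1 - p`, and `q p = 0` because `range p = Z = ker q`;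
hence `L = p + q`. Since also `range (1 - q) = Z = ker (1 - p)`, we have `(1 - p)(1 - q) = 0`,
and with `q p = 0` this makes `(1 - q) + (1 - p) q` a two-sided inverse of `p + q`.
Finally `L p = p` and `L (1 - p) = q`, so `L` maps `Z = range p` onto itself and
`S = range (1 - p)` onto `range q = T`.
-/

theorem isUnit_add_of_mul_eq_zero {R : Type*} [Ring R] {p q : R}
    (hp : IsIdempotentElem p) (hq : IsIdempotentElem q)
    (hqp : q * p = 0) (hpq : (1 - p) * (1 - q) = 0) : IsUnit (p + q) := by
  have hpq' : p * q = p + q - 1 := by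
    rw [← sub_eq_zero, ← hpq]; noncomm_ring
  refine ⟨⟨p + q, 1 - q + (1 - p) * q, ?_, ?_⟩, rfl⟩
  · simp only [mul_add, add_mul, mul_sub, sub_mul, mul_one, one_mul, hp.eq, hq.eq, hqp, hpq']
    noncomm_ring
  · simp only [mul_add, add_mul, sub_mul, one_mul, hp.eq, hq.eq, hqp, hpq']
    noncomm_ring

namespace ContinuousLinearMap

variable {R M : Type*} [Ring R] [TopologicalSpace M] [AddCommGroup M] [Module R M]

lemma mul_eq_zero_of_range_le_ker {p q : M →L[R] M} (h : p.range ≤ q.ker) : q * p = 0 :=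
  coe_injective (LinearMap.range_le_ker_iff.mp h)

lemma map_range_of_mul_eq {L f g : M →L[R] M} (h : L * f = g) :
    f.range.map (L : M →ₗ[R] M) = g.range := by
  rw [← h, ← LinearMap.range_comp]; rfl

variable [IsTopologicalAddGroup M]

lemma range_one_sub_of_isIdempotentElem {p : M →L[R] M} (hp : IsIdempotentElem p) :
    (1 - p).range = p.ker :=
  (LinearMap.IsIdempotentElem.ker_eq_range_one_sub (IsIdempotentElem.toLinearMap hp)).symm

lemma ker_one_sub_of_isIdempotentElem {p : M →L[R] M} (hp : IsIdempotentElem p) :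
    (1 - p).ker = p.range :=
  (LinearMap.IsIdempotentElem.range_eq_ker_one_sub (IsIdempotentElem.toLinearMap hp)).symm

lemma eq_one_sub_of_range_eq_ker_of_ker_eq_range {p q : M →L[R] M}
    (hp : IsIdempotentElem p) (hq : IsIdempotentElem q)
    (hr : q.range = p.ker) (hk : q.ker = p.range) : q = 1 - p :=
  IsIdempotentElem.ext hq hp.one_sub
    ⟨by rw [hr, range_one_sub_of_isIdempotentElem hp],
      by rw [hk, ker_one_sub_of_isIdempotentElem hp]⟩

end ContinuousLinearMap

lemma LinearMap.bijOn_of_map_eq {R M N : Type*} [Semiring R] [AddCommMonoid M] [AddCommMonoid N]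
    [Module R M] [Module R N] {f : M →ₗ[R] N} (hf : Function.Injective f)
    {p : Submodule R M} {q : Submodule R N} (h : p.map f = q) : Set.BijOn f p q := by
  rw [← h, Submodule.map_coe]
  exact hf.injOn.bijOn_image

theorem L_operator_invertible_maps_S_onto_T {H : Type*} [NormedAddCommGroup H]
    [InnerProductSpace ℂ H]
    (S T Z : Submodule ℂ H)
    (E₁ E₂ E₃ : H →L[ℂ] H)
    (h₁ : E₁ ∘L E₁ = E₁) (h₁r : LinearMap.range (E₁ : H →ₗ[ℂ] H) = Z) (h₁k : LinearMap.ker (E₁ : H →ₗ[ℂ] H) = S)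
    (h₂ : E₂ ∘L E₂ = E₂) (h₂r : LinearMap.range (E₂ : H →ₗ[ℂ] H) = T) (h₂k : LinearMap.ker (E₂ : H →ₗ[ℂ] H) = Z)
    (h₃ : E₃ ∘L E₃ = E₃) (h₃r : LinearMap.range (E₃ : H →ₗ[ℂ] H) = S) (h₃k : LinearMap.ker (E₃ : H →ₗ[ℂ] H) = Z) :
    IsUnit (E₁ + E₂ * E₃) ∧
    Submodule.map ((E₁ + E₂ * E₃ : H →L[ℂ] H) : H →ₗ[ℂ] H) Z = Z ∧
    Submodule.map ((E₁ + E₂ * E₃ : H →L[ℂ] H) : H →ₗ[ℂ] H) S = T ∧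
    Set.BijOn (E₁ + E₂ * E₃) (S : Set H) (T : Set H) := by
  have hE₁ : IsIdempotentElem E₁ := h₁
  have hE₃ : E₃ = 1 - E₁ :=
    ContinuousLinearMap.eq_one_sub_of_range_eq_ker_of_ker_eq_range hE₁ h₃
      (h₃r.trans h₁k.symm) (h₃k.trans h₁r.symm)
  have h₂₁ : E₂ * E₁ = 0 :=
    ContinuousLinearMap.mul_eq_zero_of_range_le_ker (h₁r.trans h₂k.symm).le
  have hL : E₁ + E₂ * E₃ = E₁ + E₂ := by rw [hE₃, mul_sub, mul_one, h₂₁, sub_zero]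
  have hunit : IsUnit (E₁ + E₂) := by
    refine isUnit_add_of_mul_eq_zero hE₁ h₂ h₂₁
      (ContinuousLinearMap.mul_eq_zero_of_range_le_ker ?_)
    rw [ContinuousLinearMap.range_one_sub_of_isIdempotentElem h₂,
      ContinuousLinearMap.ker_one_sub_of_isIdempotentElem hE₁, h₂k, h₁r]
  have hmapZ : Z.map ((E₁ + E₂ : H →L[ℂ] H) : H →ₗ[ℂ] H) = Z := by
    rw [← h₁r]
    refine ContinuousLinearMap.map_range_of_mul_eq ?_
    rw [add_mul, hE₁.eq, h₂₁, add_zero]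
  have hmapS : S.map ((E₁ + E₂ : H →L[ℂ] H) : H →ₗ[ℂ] H) = T := by
    rw [← h₃r, ← h₂r, hE₃]
    refine ContinuousLinearMap.map_range_of_mul_eq ?_
    rw [add_mul, mul_sub, mul_sub, mul_one, mul_one, hE₁.eq, h₂₁, sub_self, sub_zero, zero_add]
  rw [hL]
  exact ⟨hunit, hmapZ, hmapS,
    LinearMap.bijOn_of_map_eq (ContinuousLinearMap.isHomeomorph_of_isUnit hunit).injective hmapS⟩
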